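/- Let λ > 0 and let f : (0,∞) → ℝ be a generalized Stieltjes function of order λ. Then for each x > 0 the sequence (c_n)_{n≥0} defined by c_n = (−1)^n (Γ(λ)/Γ(n+λ)) x^n f^{(n)}(x) is a Hausdorff moment sequence: there exists a finite nonnegative Borel measure ν_x on [0,1] with c_n = ∫_{[0,1]} u^n dν_x(u) for all n ≥ 0. -/

import Mathlib

/-!
For `x > 0` and `n ≥ 1`, differentiating under the integral gives
`f⁽ⁿ⁾(x) = (-1)ⁿ (λ)ₙ ∫ (x+t)^(-λ-n) dρ(t)`, where `(λ)ₙ = Γ(n+λ)/Γ(λ)`. Hence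
`cₙ = C 0ⁿ + ∫ (x/(x+t))ⁿ (x+t)^(-λ) dρ(t)`, the `n`-th moment of `C δ₀` plus the image of
`(x+t)^(-λ) dρ(t)` under `t ↦ x/(x+t)`, which maps `[0,∞)` into `(0,1]`.
-/

open MeasureTheory Set Filter

/-- `f` is a generalized Stieltjes function of order `λ`. -/
def IsGenStieltjes (lam : ℝ) (f : ℝ → ℝ) : Prop :=
  ∃ (C : ℝ) (ρ : Measure ℝ), 0 ≤ C ∧ ρ (Set.Iio 0) = 0 ∧
    (∀ x > (0 : ℝ), Integrable (fun t => (x + t) ^ (-lam)) ρ) ∧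
    ∀ x > (0 : ℝ), f x = C + ∫ t, (x + t) ^ (-lam) ∂ρ

theorem Real.Gamma_add_nat_eq_mul_ascPochhammer {z : ℝ} (hz : 0 < z) (n : ℕ) :
    Real.Gamma (z + n) = Real.Gamma z * (ascPochhammer ℝ n).eval z := by
  induction n with
  | zero => simp
  | succ n ih =>
    rw [Nat.cast_succ, ← add_assoc, Real.Gamma_add_one (by positivity), ih,
      ascPochhammer_succ_eval]
    ring

theorem descPochhammer_eval_neg_eq_ascPochhammer {R : Type*} [CommRing R] (r : R) (n : ℕ) :
    (descPochhammer R n).eval (-r) = (-1) ^ n * (ascPochhammer R n).eval r := by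
  rw [← neg_neg r, ascPochhammer_eval_neg_eq_descPochhammer, neg_neg, ← mul_assoc, ← mul_pow,
    neg_one_mul, neg_neg, one_pow, one_mul]

section RpowKernel

variable {ρ : Measure ℝ} {p q x : ℝ}

lemma ae_nonneg_of_measure_Iio_eq_zero (hρ : ρ (Iio 0) = 0) : ∀ᵐ t ∂ρ, 0 ≤ t := by
  filter_upwards [measure_eq_zero_iff_ae_notMem.1 hρ] with t ht
  simpa using ht

lemma measurable_rpow_add (x p : ℝ) : Measurable fun t : ℝ => (x + t) ^ p :=
  (measurable_const.add measurable_id).pow_const p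

lemma integrable_rpow_add_of_le (hρ : ρ (Iio 0) = 0)
    (hp : ∀ y > (0 : ℝ), Integrable (fun t => (y + t) ^ p) ρ) (hqp : q ≤ p) (hx : 0 < x) :
    Integrable (fun t => (x + t) ^ q) ρ := by
  refine ((hp x hx).const_mul (x ^ (q - p))).mono'
    (measurable_rpow_add x q).aestronglyMeasurable ?_
  filter_upwards [ae_nonneg_of_measure_Iio_eq_zero hρ] with t ht
  have hxt : 0 < x + t := by linarith
  rw [Real.norm_of_nonneg (Real.rpow_nonneg hxt.le _)]
  calc (x + t) ^ q = (x + t) ^ (q - p) * (x + t) ^ p := by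
        rw [← Real.rpow_add hxt, sub_add_cancel]
    _ ≤ x ^ (q - p) * (x + t) ^ p := by
        refine mul_le_mul_of_nonneg_right ?_ (Real.rpow_nonneg hxt.le _)
        exact Real.rpow_le_rpow_of_nonpos hx (by linarith) (by linarith)

lemma hasDerivAt_integral_rpow_add (hρ : ρ (Iio 0) = 0) (hp1 : p ≤ 1)
    (hp : ∀ y > (0 : ℝ), Integrable (fun t => (y + t) ^ p) ρ) (hx : 0 < x) :
    HasDerivAt (fun y => ∫ t, (y + t) ^ p ∂ρ) (p * ∫ t, (x + t) ^ (p - 1) ∂ρ) x := by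
  have hx2 : 0 < x / 2 := by linarith
  have hball : ∀ y ∈ Metric.ball x (x / 2), x / 2 < y := fun y hy => by
    rw [Metric.mem_ball, Real.dist_eq, abs_lt] at hy
    linarith
  have key := hasDerivAt_integral_of_dominated_loc_of_deriv_le (μ := ρ)
    (F' := fun y t => p * (y + t) ^ (p - 1))
    (bound := fun t => |p| * (x / 2 + t) ^ (p - 1)) (Metric.ball_mem_nhds x hx2)
    (.of_forall fun y => (measurable_rpow_add y p).aestronglyMeasurable) (hp x hx)
    ((measurable_rpow_add x _).const_mul p).aestronglyMeasurable ?_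
    ((integrable_rpow_add_of_le hρ hp (by linarith) hx2).const_mul _) ?_
  · simpa only [integral_const_mul] using key.2
  · filter_upwards [ae_nonneg_of_measure_Iio_eq_zero hρ] with t ht y hy
    have hyt : x / 2 + t < y + t := by linarith [hball y hy]
    rw [norm_mul, Real.norm_eq_abs, Real.norm_of_nonneg (Real.rpow_nonneg (by linarith) _)]
    exact mul_le_mul_of_nonneg_left
      (Real.rpow_le_rpow_of_nonpos (by linarith) hyt.le (by linarith)) (abs_nonneg p)
  · filter_upwards [ae_nonneg_of_measure_Iio_eq_zero hρ] with t ht y hy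
    have hyt : 0 < y + t := by linarith [hball y hy]
    simpa using ((hasDerivAt_id y).add_const t).rpow_const (p := p) (Or.inl hyt.ne')

lemma iteratedDeriv_integral_rpow_add (hρ : ρ (Iio 0) = 0) (hp1 : p ≤ 1)
    (hp : ∀ y > (0 : ℝ), Integrable (fun t => (y + t) ^ p) ρ) (n : ℕ) (hx : 0 < x) :
    iteratedDeriv n (fun y => ∫ t, (y + t) ^ p ∂ρ) x =
      (descPochhammer ℝ n).eval p * ∫ t, (x + t) ^ (p - n) ∂ρ := by
  induction n generalizing x with
  | zero => simp
  | succ n ih =>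
    have hn : (0 : ℝ) ≤ n := n.cast_nonneg
    have hpn : ∀ y > (0 : ℝ), Integrable (fun t => (y + t) ^ (p - n)) ρ := fun y hy =>
      integrable_rpow_add_of_le hρ hp (by linarith) hy
    have hev : iteratedDeriv n (fun y => ∫ t, (y + t) ^ p ∂ρ) =ᶠ[nhds x]
        fun y => (descPochhammer ℝ n).eval p * ∫ t, (y + t) ^ (p - n) ∂ρ :=
      eventually_of_mem (isOpen_Ioi.mem_nhds hx) fun y hy => ih hy
    rw [iteratedDeriv_succ, hev.deriv_eq,
      ((hasDerivAt_integral_rpow_add hρ (by linarith) hpn hx).const_mul _).deriv,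
      descPochhammer_succ_eval, Nat.cast_succ, sub_add_eq_sub_sub]
    ring

end RpowKernel

noncomputable def stieltjesMomentMeasure (ρ : Measure ℝ) (p x : ℝ) : Measure ℝ :=
  (ρ.withDensity fun t => ENNReal.ofReal ((x + t) ^ p)).map fun t => x / (x + t)

section StieltjesMomentMeasure

variable {ρ : Measure ℝ} {p x : ℝ}

lemma measurable_div_add (x : ℝ) : Measurable fun t : ℝ => x / (x + t) :=
  measurable_const.div (measurable_const.add measurable_id)

lemma isFiniteMeasure_stieltjesMomentMeasure (hp : Integrable (fun t => (x + t) ^ p) ρ) :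
    IsFiniteMeasure (stieltjesMomentMeasure ρ p x) :=
  have := isFiniteMeasure_withDensity_ofReal hp.2
  Measure.isFiniteMeasure_map _ _

lemma stieltjesMomentMeasure_compl_Icc_eq_zero (hρ : ρ (Iio 0) = 0) (hx : 0 < x) :
    stieltjesMomentMeasure ρ p x (Icc 0 1)ᶜ = 0 := by
  rw [stieltjesMomentMeasure, Measure.map_apply (measurable_div_add x) measurableSet_Icc.compl]
  refine withDensity_absolutelyContinuous _ _ (measure_mono_null (fun t ht => ?_) hρ)
  contrapose! ht
  simp only [mem_Iio, not_lt] at ht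
  have hxt : 0 < x + t := by linarith
  simpa using And.intro (div_nonneg hx.le hxt.le) ((div_le_one hxt).2 (by linarith))

lemma integral_pow_stieltjesMomentMeasure (hρ : ρ (Iio 0) = 0) (hx : 0 < x) (n : ℕ) :
    ∫ u, u ^ n ∂stieltjesMomentMeasure ρ p x = x ^ n * ∫ t, (x + t) ^ (p - n) ∂ρ := by
  rw [stieltjesMomentMeasure, integral_map (measurable_div_add x).aemeasurable
      (continuous_pow n).aestronglyMeasurable,
    integral_withDensity_eq_integral_toReal_smul (measurable_rpow_add x p).ennreal_ofReal
      (.of_forall fun _ => ENNReal.ofReal_lt_top), ← integral_const_mul]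
  refine integral_congr_ae ?_
  filter_upwards [ae_nonneg_of_measure_Iio_eq_zero hρ] with t ht
  have hxt : 0 < x + t := by linarith
  rw [ENNReal.toReal_ofReal (Real.rpow_nonneg hxt.le _), smul_eq_mul, div_pow,
    Real.rpow_sub hxt, Real.rpow_natCast]
  field_simp

end StieltjesMomentMeasure

lemma integrable_pow_of_measure_compl_Icc_eq_zero {ν : Measure ℝ} [IsFiniteMeasure ν]
    (hν : ν (Icc 0 1)ᶜ = 0) (n : ℕ) : Integrable (fun u => u ^ n) ν := by
  refine .of_bound (continuous_pow n).aestronglyMeasurable 1 ?_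
  filter_upwards [measure_eq_zero_iff_ae_notMem.1 hν] with u hu
  simp only [mem_compl_iff, not_not, mem_Icc] at hu
  simpa [abs_of_nonneg hu.1] using pow_le_one₀ hu.1 hu.2

/-- if `f` is a generalized Stieltjes function of order `λ > 0`, then for
each `x > 0` the sequence `c_n = (−1)^n (Γ(λ)/Γ(n+λ)) x^n f^{(n)}(x)` is a Hausdorff
moment sequence: there is a finite nonnegative measure `ν_x` on `[0,1]` with
`c_n = ∫_{[0,1]} u^n dν_x(u)` for all `n ≥ 0`. -/
theorem stmt14 (lam : ℝ) (hlam : 0 < lam) (f : ℝ → ℝ) (hf : IsGenStieltjes lam f) :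
    ∀ x > (0 : ℝ), ∃ ν : Measure ℝ, IsFiniteMeasure ν ∧ ν (Set.Icc 0 1)ᶜ = 0 ∧
      ∀ n : ℕ,
        (-1 : ℝ) ^ n * (Real.Gamma lam / Real.Gamma ((n : ℝ) + lam)) * x ^ n *
            iteratedDerivWithin n f (Set.Ioi 0) x
          = ∫ u, u ^ n ∂ν := by
  obtain ⟨C, ρ, hC, hρ, hρint, hfC⟩ := hf
  intro x hx
  have hf_eq : EqOn f (fun y => C + ∫ t, (y + t) ^ (-lam) ∂ρ) (Ioi 0) := hfC
  have := isFiniteMeasure_stieltjesMomentMeasure (hρint x hx)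
  have hsupp := stieltjesMomentMeasure_compl_Icc_eq_zero (p := -lam) hρ hx
  refine ⟨C.toNNReal • Measure.dirac 0 + stieltjesMomentMeasure ρ (-lam) x,
    inferInstance, by simp [hsupp], fun n => ?_⟩
  rw [integral_add_measure ((integrable_dirac (by simp)).smul_measure_nnreal)
      (integrable_pow_of_measure_compl_Icc_eq_zero hsupp n), integral_smul_nnreal_measure,
    integral_dirac, integral_pow_stieltjesMomentMeasure hρ hx,
    iteratedDerivWithin_congr hf_eq hx, iteratedDerivWithin_of_isOpen isOpen_Ioi hx]
  have hΓ := Real.Gamma_pos_of_pos hlam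
  rcases n.eq_zero_or_pos with rfl | hn
  · simp [div_self hΓ.ne', NNReal.smul_def, hC]
  rw [iteratedDeriv_const_add hn, iteratedDeriv_integral_rpow_add hρ (by linarith) hρint n hx,
    add_comm (n : ℝ), Real.Gamma_add_nat_eq_mul_ascPochhammer hlam, zero_pow hn.ne']
  have hasc := ascPochhammer_pos n lam hlam
  rw [descPochhammer_eval_neg_eq_ascPochhammer, smul_zero, zero_add]
  field_simp
  rw [← pow_mul, Even.neg_one_pow ⟨n, by ring⟩, one_mul]
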